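/- As α → 0⁺, the function a_{it} = Φ₃(1; 1/2; it(α/2)², (iβt/2)²) satisfies a_{it} = cos(βt) + (2i/β)(α/2)² sin(βt) + O(α⁴), uniformly for t in compact subsets of (0,∞), for fixed β > 0. -/

import Mathlib

/-- The Humbert confluent hypergeometric function `Φ₃(a;b;x,y)`. -/
noncomputable def humbertPhi3 (a b x y : ℂ) : ℂ :=
  ∑' p : ℕ × ℕ,
    (Polynomial.eval a (ascPochhammer ℂ p.1) /
        Polynomial.eval b (ascPochhammer ℂ (p.1 + p.2))) *
      (x ^ p.1 / (p.1.factorial : ℂ)) * (y ^ p.2 / (p.2.factorial : ℂ))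

/-!
Expanding in powers of `x`, `Φ₃(1; 1/2; x, y) = ∑ₘ xᵐ cₘ(y)` with
`cₘ(y) = ∑ₙ yⁿ / ((1/2)_{m+n} n!)`. Since `(1/2)_k = (2k)! / (4ᵏ k!)`, the first two coefficients
are the cosine and sine series: `c₀((iw/2)²) = cos w` and `c₁((iw/2)²) = (2/w) sin w`. The same
formula gives `k!/4ᵏ ≤ (1/2)_k`, so the terms are dominated by `(4|x|)ᵐ/m! · (4|y|)ⁿ/n!` and the
tail `m ≥ 2` is at most `(4|x|)² e^{4|y|}` once `4|x| ≤ 1`. With `x = it(α/2)²` this is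
`t²α⁴ e^{(βt)²}`, uniformly bounded for `t` in a compact set.
-/

open Nat

theorem ascPochhammer_eval_half {K : Type*} [Field K] [CharZero K] (k : ℕ) :
    (ascPochhammer K k).eval (1 / 2 : K) = (2 * k)! / (4 ^ k * k !) := by
  induction k with
  | zero => simp
  | succ k ih =>
    rw [ascPochhammer_succ_eval, ih, show 2 * (k + 1) = 2 * k + 1 + 1 by ring]
    push_cast [Nat.factorial_succ]
    field_simp
    ring

theorem ascPochhammer_eval_half_ne_zero (k : ℕ) : (ascPochhammer ℂ k).eval (1 / 2 : ℂ) ≠ 0 := by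
  rw [ascPochhammer_eval_half]
  exact div_ne_zero (by exact_mod_cast (2 * k).factorial_ne_zero)
    (mul_ne_zero (pow_ne_zero _ (by norm_num)) (by exact_mod_cast k.factorial_ne_zero))

theorem Nat.factorial_mul_factorial_le_factorial_two_mul (k : ℕ) : k ! * k ! ≤ (2 * k)! :=
  Nat.le_of_dvd (Nat.factorial_pos _)
    (two_mul k ▸ Nat.factorial_mul_factorial_dvd_factorial_add k k)

theorem norm_inv_ascPochhammer_eval_half_le (k : ℕ) :
    ‖((ascPochhammer ℂ k).eval (1 / 2 : ℂ))⁻¹‖ ≤ 4 ^ k / k ! := by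
  have hk : (0 : ℝ) < k ! := by positivity
  have h2k : (0 : ℝ) < (2 * k)! := by positivity
  have hle : (k ! * k ! : ℝ) ≤ (2 * k)! := by
    exact_mod_cast Nat.factorial_mul_factorial_le_factorial_two_mul k
  rw [ascPochhammer_eval_half, norm_inv, norm_div, norm_mul, norm_pow]
  simp only [Complex.norm_natCast, Complex.norm_ofNat]
  rw [inv_div, div_le_div_iff₀ h2k hk]
  nlinarith [pow_pos (four_pos : (0 : ℝ) < 4) k]

theorem hasSum_pow_div_factorial_rexp (c : ℝ) : HasSum (fun n => c ^ n / n !) (Real.exp c) :=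
  Real.exp_eq_exp_ℝ ▸ NormedSpace.expSeries_div_hasSum_exp c

noncomputable def phi3Coeff (m : ℕ) (y : ℂ) : ℂ :=
  ∑' n : ℕ, y ^ n / ((ascPochhammer ℂ (m + n)).eval (1 / 2 : ℂ) * n !)

theorem humbertPhi3_one_half_term (x y : ℂ) (m n : ℕ) :
    (ascPochhammer ℂ m).eval 1 / (ascPochhammer ℂ (m + n)).eval (1 / 2 : ℂ) *
        (x ^ m / m !) * (y ^ n / n !) =
      x ^ m * (y ^ n / ((ascPochhammer ℂ (m + n)).eval (1 / 2 : ℂ) * n !)) := by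
  have hm : (m ! : ℂ) ≠ 0 := by exact_mod_cast m.factorial_ne_zero
  have := ascPochhammer_eval_half_ne_zero (m + n)
  rw [ascPochhammer_eval_one]
  field_simp

theorem norm_humbertPhi3_one_half_term_le (x y : ℂ) (m n : ℕ) :
    ‖x ^ m * (y ^ n / ((ascPochhammer ℂ (m + n)).eval (1 / 2 : ℂ) * n !))‖ ≤
      (4 * ‖x‖) ^ m / m ! * ((4 * ‖y‖) ^ n / n !) := by
  have hfac : (m ! : ℝ) ≤ (m + n)! := by exact_mod_cast Nat.factorial_le (m.le_add_right n)
  have hinv := norm_inv_ascPochhammer_eval_half_le (m + n)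
  calc ‖x ^ m * (y ^ n / ((ascPochhammer ℂ (m + n)).eval (1 / 2 : ℂ) * n !))‖
      = ‖x‖ ^ m * ‖y‖ ^ n * ‖((ascPochhammer ℂ (m + n)).eval (1 / 2 : ℂ))⁻¹‖ / n ! := by
        rw [div_eq_mul_inv, mul_inv, norm_mul, norm_mul, norm_mul, norm_pow, norm_pow, norm_inv,
          norm_inv, Complex.norm_natCast]
        ring
    _ ≤ ‖x‖ ^ m * ‖y‖ ^ n * (4 ^ (m + n) / m !) / n ! := by
        gcongr
        exact hinv.trans (div_le_div_of_nonneg_left (by positivity) (by positivity) hfac)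
    _ = (4 * ‖x‖) ^ m / m ! * ((4 * ‖y‖) ^ n / n !) := by
        rw [mul_pow, mul_pow, pow_add]
        ring

theorem norm_pow_mul_phi3Coeff_le (x y : ℂ) (m : ℕ) :
    ‖x ^ m * phi3Coeff m y‖ ≤ (4 * ‖x‖) ^ m / m ! * Real.exp (4 * ‖y‖) := by
  rw [phi3Coeff, ← tsum_mul_left]
  exact tsum_of_norm_bounded ((hasSum_pow_div_factorial_rexp _).mul_left _)
    (norm_humbertPhi3_one_half_term_le x y m)

theorem summable_pow_mul_phi3Coeff (x y : ℂ) : Summable fun m => x ^ m * phi3Coeff m y :=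
  .of_norm_bounded ((Real.summable_pow_div_factorial _).mul_right _)
    (norm_pow_mul_phi3Coeff_le x y)

theorem humbertPhi3_one_half_eq_tsum (x y : ℂ) :
    humbertPhi3 1 (1 / 2) x y = ∑' m, x ^ m * phi3Coeff m y := by
  have hsum : Summable fun p : ℕ × ℕ =>
      x ^ p.1 * (y ^ p.2 / ((ascPochhammer ℂ (p.1 + p.2)).eval (1 / 2 : ℂ) * p.2 !)) :=
    .of_norm_bounded (Summable.mul_of_nonneg (Real.summable_pow_div_factorial _)
        (Real.summable_pow_div_factorial _) (fun _ => by positivity) (fun _ => by positivity))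
      (fun p => norm_humbertPhi3_one_half_term_le x y p.1 p.2)
  have h1 : humbertPhi3 1 (1 / 2) x y = ∑' p : ℕ × ℕ,
      x ^ p.1 * (y ^ p.2 / ((ascPochhammer ℂ (p.1 + p.2)).eval (1 / 2 : ℂ) * p.2 !)) :=
    tsum_congr fun p => humbertPhi3_one_half_term x y p.1 p.2
  rw [h1, hsum.tsum_prod' hsum.prod_factor]
  exact tsum_congr fun m => by rw [phi3Coeff, ← tsum_mul_left]

theorem Complex.I_mul_div_two_sq (w : ℂ) : (Complex.I * w / 2) ^ 2 = -(w ^ 2 / 4) := by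
  linear_combination (w ^ 2 / 4) * Complex.I_sq

theorem phi3Coeff_zero (w : ℂ) : phi3Coeff 0 ((Complex.I * w / 2) ^ 2) = Complex.cos w := by
  rw [Complex.I_mul_div_two_sq]
  refine ((Complex.hasSum_cos w).congr_fun fun n => ?_).tsum_eq
  have hn : (n ! : ℂ) ≠ 0 := by exact_mod_cast n.factorial_ne_zero
  have h2n : ((2 * n)! : ℂ) ≠ 0 := by exact_mod_cast (2 * n).factorial_ne_zero
  rw [zero_add, ascPochhammer_eval_half, neg_pow, div_pow, ← pow_mul]
  field_simp

theorem phi3Coeff_one {w : ℂ} (hw : w ≠ 0) :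
    phi3Coeff 1 ((Complex.I * w / 2) ^ 2) = 2 / w * Complex.sin w := by
  rw [Complex.I_mul_div_two_sq]
  refine (((Complex.hasSum_sin w).mul_left (2 / w)).congr_fun fun n => ?_).tsum_eq
  have hn : (n ! : ℂ) ≠ 0 := by exact_mod_cast n.factorial_ne_zero
  have h2n : ((2 * n + 1)! : ℂ) ≠ 0 := by exact_mod_cast (2 * n + 1).factorial_ne_zero
  have h2n2 : (2 * n + 1 + 1 : ℂ) ≠ 0 := by exact_mod_cast (2 * n + 1).succ_ne_zero
  rw [add_comm 1 n, ascPochhammer_eval_half, neg_pow, div_pow, ← pow_mul,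
    show 2 * (n + 1) = 2 * n + 1 + 1 by ring, Nat.factorial_succ (2 * n + 1), Nat.factorial_succ n]
  push_cast
  field_simp
  ring

theorem norm_humbertPhi3_sub_le {x : ℂ} (hx : 4 * ‖x‖ ≤ 1) (y : ℂ) :
    ‖humbertPhi3 1 (1 / 2) x y - (phi3Coeff 0 y + x * phi3Coeff 1 y)‖ ≤
      (4 * ‖x‖) ^ 2 * Real.exp (4 * ‖y‖) := by
  set a := 4 * ‖x‖
  have htail : HasSum (fun m => a ^ (m + 2) / (m + 2)! * Real.exp (4 * ‖y‖))
      ((Real.exp a - 1 - a) * Real.exp (4 * ‖y‖)) := by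
    have := ((hasSum_nat_add_iff' 2).2 (hasSum_pow_div_factorial_rexp a)).mul_right
      (Real.exp (4 * ‖y‖))
    simpa [Finset.sum_range_succ, sub_sub] using this
  have hexp : Real.exp a - 1 - a ≤ a ^ 2 :=
    le_of_abs_le (Real.abs_exp_sub_one_sub_id_le (abs_le.2 ⟨by linarith [norm_nonneg x], hx⟩))
  rw [humbertPhi3_one_half_eq_tsum,
    ← (summable_pow_mul_phi3Coeff x y).sum_add_tsum_nat_add 2]
  simp only [Finset.sum_range_succ, Finset.sum_range_zero, pow_zero, pow_one, one_mul, zero_add,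
    add_sub_cancel_left]
  calc ‖∑' m, x ^ (m + 2) * phi3Coeff (m + 2) y‖
      ≤ (Real.exp a - 1 - a) * Real.exp (4 * ‖y‖) :=
        tsum_of_norm_bounded htail fun m => norm_pow_mul_phi3Coeff_le x y (m + 2)
    _ ≤ a ^ 2 * Real.exp (4 * ‖y‖) := by gcongr

theorem norm_humbertPhi3_sub_cos_sin_le {β t : ℝ} (hβ : β ≠ 0) (ht : t ≠ 0) {α : ℝ}
    (hα : |t| * α ^ 2 ≤ 1) :
    ‖humbertPhi3 1 (1 / 2) (Complex.I * t * ((α : ℂ) / 2) ^ 2) ((Complex.I * β * t / 2) ^ 2) -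
        (Complex.cos (β * t) + (2 * Complex.I / β) * ((α : ℂ) / 2) ^ 2 * Complex.sin (β * t))‖ ≤
      t ^ 2 * Real.exp ((β * t) ^ 2) * α ^ 4 := by
  set x : ℂ := Complex.I * t * ((α : ℂ) / 2) ^ 2
  set w : ℂ := β * t
  have hnx : 4 * ‖x‖ = |t| * α ^ 2 := by
    simp [x, div_pow]
    ring
  have hny : 4 * ‖(Complex.I * w / 2) ^ 2‖ = (β * t) ^ 2 := by
    simp only [w, norm_pow, norm_div, norm_mul, Complex.norm_I, Complex.norm_real,
      Real.norm_eq_abs, Complex.norm_ofNat]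
    rw [one_mul, div_pow, mul_pow, sq_abs, sq_abs]
    ring
  have hβ' : (β : ℂ) ≠ 0 := by exact_mod_cast hβ
  have ht' : (t : ℂ) ≠ 0 := by exact_mod_cast ht
  have hcoeff :
      x * (2 / w * Complex.sin w) = (2 * Complex.I / β) * ((α : ℂ) / 2) ^ 2 * Complex.sin w := by
    simp only [x, w]
    field_simp
  rw [show (Complex.I * β * t : ℂ) = Complex.I * w by ring, ← phi3Coeff_zero, ← hcoeff,
    ← phi3Coeff_one (mul_ne_zero hβ' ht')]
  calc _ ≤ (|t| * α ^ 2) ^ 2 * Real.exp ((β * t) ^ 2) :=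
        hnx ▸ hny ▸ norm_humbertPhi3_sub_le (hnx ▸ hα) _
    _ = t ^ 2 * Real.exp ((β * t) ^ 2) * α ^ 4 := by rw [mul_pow, sq_abs]; ring

/-- As `α → 0⁺`, the function `a_{it} = Φ₃(1; 1/2; it(α/2)², (iβt/2)²)` satisfies
`a_{it} = cos(βt) + (2i/β)(α/2)² sin(βt) + O(α⁴)`, uniformly for `t` in compact
subsets of `(0,∞)`, for fixed `β > 0`. -/
theorem humbertPhi3_expansion_small_alpha (β : ℝ) (hβ : 0 < β) :
    ∀ K : Set ℝ, K ⊆ Set.Ioi 0 → IsCompact K →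
      ∃ C > (0 : ℝ), ∃ δ > (0 : ℝ), ∀ α : ℝ, 0 < α → α < δ → ∀ t ∈ K,
        ‖humbertPhi3 1 (1 / 2) (Complex.I * t * ((α : ℂ) / 2) ^ 2)
              ((Complex.I * β * t / 2) ^ 2) -
            (Complex.cos (β * t) +
              (2 * Complex.I / β) * ((α : ℂ) / 2) ^ 2 * Complex.sin (β * t))‖ ≤
          C * α ^ 4 := by
  intro K hK hKc
  obtain ⟨T₀, hT₀⟩ := hKc.bddAbove
  set T := max T₀ 1
  have hT : 1 ≤ T := le_max_right _ _
  refine ⟨T ^ 2 * Real.exp ((β * T) ^ 2), by positivity, 1 / T, by positivity,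
    fun α hα hαδ t ht => ?_⟩
  have ht0 : 0 < t := hK ht
  have htT : t ≤ T := (hT₀ ht).trans (le_max_left _ _)
  have hαT : α * T < 1 := by rwa [lt_div_iff₀ (by positivity)] at hαδ
  calc _ ≤ t ^ 2 * Real.exp ((β * t) ^ 2) * α ^ 4 :=
        norm_humbertPhi3_sub_cos_sin_le hβ.ne' ht0.ne'
          (by rw [abs_of_pos ht0]; nlinarith [mul_pos hα ht0])
    _ ≤ T ^ 2 * Real.exp ((β * T) ^ 2) * α ^ 4 := by gcongr
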